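/- arXiv:1809.09411 — 4 statements merged into one kernel-verified Lean document; each statement's English description precedes it below -/
import Mathlib

section
/- Let Ŵ and E be independent real random variables, exponentially distributed with means σ̂1² > 0 and σ_{e1}² > 0 respectively. Let P1, P2, N0, γ̄1, γ̄2 > 0 with λ_P := P2/P1 > γ̄2. Define the SINRs γ21 = Ŵ·P2/(Ŵ·P1 + E·(P1+P2) + N0) and γ1 = Ŵ·P1/(E·(P1+P2) + N0). Then the outage probability of the near user UE1 satisfies P{ γ21 < γ̄2 or γ1 < γ̄1 } = 1 − (1 + χ_M·(1+λ_P)·σ_{e1}²/σ̂1²)^{−1} · exp(−χ_M/ρ11), where ρ11 = P1·σ̂1²/N0, χ = γ̄2/(λ_P − γ̄2) and χ_M = max{χ, γ̄1}. -/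
/-!
For `w, e ≥ 0` the condition `γ21 ≥ γ̄2` reads `w ≥ χ · (e (P1 + P2) + N0) / P1` and `γ1 ≥ γ̄1`
reads `w ≥ γ̄1 · (e (P1 + P2) + N0) / P1`, so the complement of the outage event is, almost surely,
the half-plane `w ≥ α e + β` with `α = χ_M (1 + λ_P)` and `β = χ_M N0 / P1`. Conditioning on
`E = e`, the exponential tail gives `P(Ŵ ≥ α e + β) = exp (-(α e + β) / σ̂1²)`, and averaging over
`E` is the Laplace transform `𝔼[exp (-s E)] = (1 + s σ_{e1}²)⁻¹` of the exponential law.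
-/

open MeasureTheory ProbabilityTheory

/-- The law of an exponentially distributed random variable with mean `a`:
density `(1/a)·exp(−x/a)` with respect to Lebesgue measure on `[0, ∞)`. -/
noncomputable def expMean (a : ℝ) : Measure ℝ :=
  volume.withDensity fun x => ENNReal.ofReal (if 0 ≤ x then (1 / a) * Real.exp (-x / a) else 0)

open Real Set

lemma setLIntegral_ofReal_mul_exp_neg_mul_Ici {C k : ℝ} (hC : 0 ≤ C) (hk : 0 < k) (t : ℝ) :
    ∫⁻ x in Ici t, ENNReal.ofReal (C * exp (-k * x)) = ENNReal.ofReal (C * exp (-k * t) / k) := by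
  have hint : IntegrableOn (fun x => C * exp (-k * x)) (Ici t) := by
    rw [integrableOn_Ici_iff_integrableOn_Ioi]
    exact (exp_neg_integrableOn_Ioi t hk).const_mul C
  rw [← ofReal_integral_eq_lintegral_ofReal hint, integral_Ici_eq_integral_Ioi,
    integral_const_mul, integral_exp_mul_Ioi (neg_lt_zero.2 hk)]
  · ring_nf
  · exact Filter.Eventually.of_forall fun x => by positivity

lemma ProbabilityTheory.IndepFun.measure_preimage_prodMk {Ω α β : Type*} [MeasurableSpace Ω]
    [MeasurableSpace α] [MeasurableSpace β] {P : Measure Ω} [IsFiniteMeasure P]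
    {X : Ω → α} {Y : Ω → β} {μ : Measure α} {ν : Measure β} [NeZero μ] [NeZero ν]
    (hXY : IndepFun X Y P) (hX : P.map X = μ) (hY : P.map Y = ν) {S : Set (α × β)} (hS : MeasurableSet S) :
    P ((fun ω => (X ω, Y ω)) ⁻¹' S) = μ.prod ν S := by
  have hXm : AEMeasurable X P := aemeasurable_of_map_neZero (hX ▸ inferInstance)
  have hYm : AEMeasurable Y P := aemeasurable_of_map_neZero (hY ▸ inferInstance)
  rw [← Measure.map_apply_of_aemeasurable (hXm.prodMk hYm) hS,
    hXY.map_prod_eq_prod_map_map hXm hYm, hX, hY]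

lemma le_mul_div_add_iff {γ x w c : ℝ} (hγx : γ < x) (hw : 0 ≤ w) (hc : 0 < c) :
    γ ≤ w * x / (w + c) ↔ γ / (x - γ) * c ≤ w := by
  have hxγ : 0 < x - γ := sub_pos.2 hγx
  rw [le_div_iff₀ (by positivity), div_mul_eq_mul_div, div_le_iff₀ hxγ]
  constructor <;> intro h <;> linarith

section ExpMean

variable {a : ℝ}

lemma expMean_eq_withDensity_restrict (a : ℝ) :
    expMean a = (volume.restrict (Ici 0)).withDensity
      fun x => ENNReal.ofReal (a⁻¹ * exp (-a⁻¹ * x)) := by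
  rw [expMean, ← withDensity_indicator measurableSet_Ici]
  congr 1
  funext x
  by_cases hx : 0 ≤ x
  · simp [hx, indicator, div_eq_inv_mul]
  · simp [hx, indicator]

lemma ae_nonneg_expMean (a : ℝ) : ∀ᵐ x ∂expMean a, 0 ≤ x := by
  rw [expMean_eq_withDensity_restrict]
  exact (withDensity_absolutelyContinuous _ _).ae_le (ae_restrict_mem measurableSet_Ici)

lemma isProbabilityMeasure_expMean (ha : 0 < a) : IsProbabilityMeasure (expMean a) := by
  constructor
  rw [expMean_eq_withDensity_restrict, withDensity_apply _ MeasurableSet.univ,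
    Measure.restrict_univ,
    setLIntegral_ofReal_mul_exp_neg_mul_Ici (inv_nonneg.2 ha.le) (inv_pos.2 ha)]
  simp [ha.ne']

lemma expMean_Ici (ha : 0 < a) {t : ℝ} (ht : 0 ≤ t) :
    expMean a (Ici t) = ENNReal.ofReal (exp (-t / a)) := by
  rw [expMean_eq_withDensity_restrict, withDensity_apply _ measurableSet_Ici,
    Measure.restrict_restrict measurableSet_Ici, Ici_inter_Ici, max_eq_left ht,
    setLIntegral_ofReal_mul_exp_neg_mul_Ici (inv_nonneg.2 ha.le) (inv_pos.2 ha)]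
  congr 1
  field_simp

lemma lintegral_exp_neg_mul_expMean (ha : 0 < a) {s : ℝ} (hs : 0 ≤ s) :
    ∫⁻ y, ENNReal.ofReal (exp (-s * y)) ∂expMean a = ENNReal.ofReal (1 + s * a)⁻¹ := by
  have hdens : Measurable fun x : ℝ => ENNReal.ofReal (a⁻¹ * exp (-a⁻¹ * x)) := by fun_prop
  rw [expMean_eq_withDensity_restrict,
    lintegral_withDensity_eq_lintegral_mul _ hdens (by fun_prop)]
  have hmul : ∀ y, ENNReal.ofReal (a⁻¹ * exp (-a⁻¹ * y)) * ENNReal.ofReal (exp (-s * y))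
      = ENNReal.ofReal (a⁻¹ * exp (-(a⁻¹ + s) * y)) := fun y => by
    rw [← ENNReal.ofReal_mul (by positivity), mul_assoc, ← exp_add]
    ring_nf
  simp only [Pi.mul_apply, hmul]
  rw [setLIntegral_ofReal_mul_exp_neg_mul_Ici (by positivity) (by positivity), mul_zero,
    exp_zero, mul_one]
  congr 1
  field_simp

end ExpMean

lemma prod_expMean_setOf_le {σh σe α β : ℝ} (hσh : 0 < σh) (hσe : 0 < σe) (hα : 0 ≤ α)
    (hβ : 0 ≤ β) :
    (expMean σh).prod (expMean σe) {p | α * p.2 + β ≤ p.1}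
      = ENNReal.ofReal ((1 + α * σe / σh)⁻¹ * exp (-β / σh)) := by
  have : IsProbabilityMeasure (expMean σh) := isProbabilityMeasure_expMean hσh
  have : IsProbabilityMeasure (expMean σe) := isProbabilityMeasure_expMean hσe
  rw [Measure.prod_apply_symm (measurableSet_le (by fun_prop) (by fun_prop))]
  have hsection : ∀ᵐ y ∂expMean σe,
      expMean σh ((fun x => (x, y)) ⁻¹' {p : ℝ × ℝ | α * p.2 + β ≤ p.1})
        = ENNReal.ofReal (exp (-β / σh)) * ENNReal.ofReal (exp (-(α / σh) * y)) := by
    filter_upwards [ae_nonneg_expMean σe] with y hy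
    change expMean σh (Ici (α * y + β)) = _
    rw [← ENNReal.ofReal_mul (exp_pos _).le, ← exp_add, expMean_Ici hσh (by positivity)]
    ring_nf
  rw [lintegral_congr_ae hsection, lintegral_const_mul _ (by fun_prop),
    lintegral_exp_neg_mul_expMean hσe (by positivity), ← ENNReal.ofReal_mul (exp_pos _).le,
    mul_comm, mul_div_right_comm]

section Outage

variable {P1 P2 N0 γ1 γ2 : ℝ}

def outageSet (P1 P2 N0 γ1 γ2 : ℝ) : Set (ℝ × ℝ) :=
  {p | p.1 * P2 / (p.1 * P1 + p.2 * (P1 + P2) + N0) < γ2 ∨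
    p.1 * P1 / (p.2 * (P1 + P2) + N0) < γ1}

lemma measurableSet_outageSet : MeasurableSet (outageSet P1 P2 N0 γ1 γ2) := by
  rw [outageSet, ofPred_or]
  exact (measurableSet_lt (by fun_prop) measurable_const).union
    (measurableSet_lt (by fun_prop) measurable_const)

lemma notMem_outageSet_iff (hP1 : 0 < P1) (hP2 : 0 < P2) (hN0 : 0 < N0) (hlam : γ2 < P2 / P1)
    {p : ℝ × ℝ} (hw : 0 ≤ p.1) (he : 0 ≤ p.2) :
    p ∉ outageSet P1 P2 N0 γ1 γ2 ↔
      max (γ2 / (P2 / P1 - γ2)) γ1 * ((p.2 * (P1 + P2) + N0) / P1) ≤ p.1 := by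
  obtain ⟨w, e⟩ := p
  set c := (e * (P1 + P2) + N0) / P1 with hc_def
  have hc : 0 < c := by positivity
  have h21 : w * P2 / (w * P1 + e * (P1 + P2) + N0) = w * (P2 / P1) / (w + c) := by
    rw [hc_def]
    field_simp
    ring
  have h1 : w * P1 / (e * (P1 + P2) + N0) = w / c := by
    rw [hc_def]
    field_simp
  rw [outageSet, mem_ofPred_eq, not_or, not_lt, not_lt, h21, h1,
    le_mul_div_add_iff hlam hw hc, le_div_iff₀ hc, max_mul_of_nonneg _ _ hc.le, max_le_iff]

lemma prod_expMean_real_compl_outageSet {σh σe χM : ℝ} (hσh : 0 < σh) (hσe : 0 < σe)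
    (hP1 : 0 < P1) (hP2 : 0 < P2) (hN0 : 0 < N0) (hγ1 : 0 < γ1) (hlam : γ2 < P2 / P1)
    (hχM : χM = max (γ2 / (P2 / P1 - γ2)) γ1) :
    ((expMean σh).prod (expMean σe)).real (outageSet P1 P2 N0 γ1 γ2)ᶜ
      = (1 + χM * (1 + P2 / P1) * σe / σh)⁻¹ * exp (-χM / (P1 * σh / N0)) := by
  have hχM_pos : 0 < χM := hχM ▸ lt_max_of_lt_right hγ1
  have hhalfPlane : (expMean σh).prod (expMean σe) (outageSet P1 P2 N0 γ1 γ2)ᶜ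
      = (expMean σh).prod (expMean σe) {p | χM * (1 + P2 / P1) * p.2 + χM * N0 / P1 ≤ p.1} := by
    refine measure_congr (Filter.eventuallyEq_set.2 ?_)
    filter_upwards [Measure.quasiMeasurePreserving_fst.ae (ae_nonneg_expMean σh),
      Measure.quasiMeasurePreserving_snd.ae (ae_nonneg_expMean σe)] with p hw he
    have hlin : χM * (1 + P2 / P1) * p.2 + χM * N0 / P1
        = χM * ((p.2 * (P1 + P2) + N0) / P1) := by
      field_simp
    rw [mem_compl_iff, notMem_outageSet_iff hP1 hP2 hN0 hlam hw he, hlin, hχM]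
  rw [measureReal_def, hhalfPlane, prod_expMean_setOf_le hσh hσe (by positivity) (by positivity),
    ENNReal.toReal_ofReal (by positivity)]
  congr 2
  field_simp

end Outage

theorem stmt_2_general {Ω : Type*} [MeasurableSpace Ω] (P : Measure Ω) [IsProbabilityMeasure P]
    (W E : Ω → ℝ) (σh1 σe1 P1 P2 N0 γ1 γ2 : ℝ)
    (hσh1 : 0 < σh1) (hσe1 : 0 < σe1)
    (hP1 : 0 < P1) (hP2 : 0 < P2) (hN0 : 0 < N0) (hγ1 : 0 < γ1)
    (hlam : γ2 < P2 / P1)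
    (hind : IndepFun W E P)
    (hW : P.map W = expMean σh1) (hE : P.map E = expMean σe1)
    (lamP χ χM ρ11 : ℝ)
    (hlamP : lamP = P2 / P1) (hχ : χ = γ2 / (lamP - γ2))
    (hχM : χM = max χ γ1) (hρ11 : ρ11 = P1 * σh1 / N0) :
    (P {ω | W ω * P2 / (W ω * P1 + E ω * (P1 + P2) + N0) < γ2 ∨
            W ω * P1 / (E ω * (P1 + P2) + N0) < γ1}).toReal =
      1 - (1 + χM * (1 + lamP) * σe1 / σh1)⁻¹ * Real.exp (-χM / ρ11) := by
  subst hlamP hχ hρ11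
  have := isProbabilityMeasure_expMean hσh1
  have := isProbabilityMeasure_expMean hσe1
  have hS : MeasurableSet (outageSet P1 P2 N0 γ1 γ2) := measurableSet_outageSet
  change (P ((fun ω => (W ω, E ω)) ⁻¹' outageSet P1 P2 N0 γ1 γ2)).toReal = _
  rw [hind.measure_preimage_prodMk hW hE hS, ← measureReal_def,
    ← prod_expMean_real_compl_outageSet hσh1 hσe1 hP1 hP2 hN0 hγ1 hlam hχM,
    probReal_compl_eq_one_sub hS, sub_sub_cancel]

/-- Theorem 1 of the paper: outage probability of the near user UE1.
`W = |ĥ1|²` and `E = |e1|²` are independent exponentials with means `σh1 = σ̂1²`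
and `σe1 = σ_{e1}²`.  With `λ_P = P2/P1 > γ̄2`, `χ = γ̄2/(λ_P − γ̄2)`,
`χ_M = max{χ, γ̄1}` and `ρ11 = P1·σ̂1²/N0`,
`P{γ21 < γ̄2 ∨ γ1 < γ̄1} = 1 − (1 + χ_M·(1+λ_P)·σe1/σh1)⁻¹·exp(−χ_M/ρ11)`. -/
theorem stmt_2 {Ω : Type*} [MeasurableSpace Ω] (P : Measure Ω) [IsProbabilityMeasure P]
    (W E : Ω → ℝ) (σh1 σe1 P1 P2 N0 γ1 γ2 : ℝ)
    (hσh1 : 0 < σh1) (hσe1 : 0 < σe1)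
    (hP1 : 0 < P1) (hP2 : 0 < P2) (hN0 : 0 < N0) (hγ1 : 0 < γ1) (hγ2 : 0 < γ2)
    (hlam : γ2 < P2 / P1)
    (hind : IndepFun W E P)
    (hW : P.map W = expMean σh1) (hE : P.map E = expMean σe1)
    (lamP χ χM ρ11 : ℝ)
    (hlamP : lamP = P2 / P1) (hχ : χ = γ2 / (lamP - γ2))
    (hχM : χM = max χ γ1) (hρ11 : ρ11 = P1 * σh1 / N0) :
    (P {ω | W ω * P2 / (W ω * P1 + E ω * (P1 + P2) + N0) < γ2 ∨
            W ω * P1 / (E ω * (P1 + P2) + N0) < γ1}).toReal =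
      1 - (1 + χM * (1 + lamP) * σe1 / σh1)⁻¹ * Real.exp (-χM / ρ11) :=
  stmt_2_general P W E σh1 σe1 P1 P2 N0 γ1 γ2 hσh1 hσe1 hP1 hP2 hN0 hγ1 hlam hind hW hE lamP χ χM
    ρ11 hlamP hχ hχM hρ11
end

section
/- Let Ŵ and E be independent real random variables, exponentially distributed with means σ̂2² > 0 and σ_{e2}² > 0 respectively, and let P1, P2, N0 > 0, λ_P := P2/P1. Define X = Ŵ·P2/(Ŵ·P1 + E·(P1+P2) + N0) and ρ12 = P1·σ̂2²/N0. Then the cumulative distribution function of X satisfies: for 0 ≤ x < λ_P, P{X ≤ x} = 1 − (1 + x·(1+λ_P)/(λ_P − x) · σ_{e2}²/σ̂2²)^{−1} · exp( −x/((λ_P − x)·ρ12) ), and for x ≥ λ_P, P{X ≤ x} = 1. -/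
/-!
Almost surely `W, E ≥ 0`, and then, for `x < λ_P`, clearing the denominator turns `X ≤ x` into
`W ≤ a E + b` with `a = x (P1 + P2) / (P2 - x P1)` and `b = x N0 / (P2 - x P1)`, while for
`x ≥ λ_P` the event `X ≤ x` always holds. Conditioning on `E`, the exponential tail of `W`
(rate `r = 1/σ̂2²`) gives `P(W > a E + b) = 𝔼[exp(-r (a E + b))]`, and the Laplace transform of the
exponential law of `E` (rate `s = 1/σ_{e2}²`) evaluates this to `s / (s + r a) · exp(-r b)`.
-/

open MeasureTheory ProbabilityTheory

open Real Set

lemma expMean_eq_expMeasure (a : ℝ) : expMean a = expMeasure a⁻¹ := by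
  refine congrArg volume.withDensity (funext fun x => ?_)
  change _ = exponentialPDF a⁻¹ x
  rw [exponentialPDF_eq, one_div, neg_div, div_eq_inv_mul]

lemma expMeasure_eq_withDensity (r : ℝ) : expMeasure r = volume.withDensity (exponentialPDF r) :=
  rfl

lemma measurable_exponentialPDF (r : ℝ) : Measurable (exponentialPDF r) :=
  (measurable_exponentialPDFReal r).ennreal_ofReal

lemma ae_nonneg_expMeasure (r : ℝ) : ∀ᵐ x ∂expMeasure r, 0 ≤ x := by
  rw [expMeasure_eq_withDensity, ae_withDensity_iff (measurable_exponentialPDF r)]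
  exact Filter.Eventually.of_forall fun x hx =>
    not_lt.mp fun hneg => hx (exponentialPDF_of_neg hneg)

lemma expMeasure_Ioi {r t : ℝ} (hr : 0 < r) (ht : 0 ≤ t) :
    expMeasure r (Ioi t) = ENNReal.ofReal (exp (-(r * t))) := by
  have := isProbabilityMeasure_expMeasure hr
  have hle : exp (-(r * t)) ≤ 1 := exp_le_one_iff.mpr (neg_nonpos.mpr (by positivity))
  rw [← compl_Iic, prob_compl_eq_one_sub measurableSet_Iic, ← ofReal_cdf, cdf_expMeasure_eq hr,
    if_pos ht, ← ENNReal.ofReal_one, ← ENNReal.ofReal_sub _ (sub_nonneg.mpr hle), sub_sub_cancel]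

lemma lintegral_exp_neg_mul_expMeasure {r c : ℝ} (hr : 0 < r) (hrc : 0 < r + c) :
    ∫⁻ x, ENNReal.ofReal (exp (-(c * x))) ∂expMeasure r = ENNReal.ofReal (r / (r + c)) := by
  -- tilting by `exp (-c x)` turns the rate-`r` density into a multiple of the rate-`r + c` one
  have hdensity : ∀ x, exponentialPDF r x * ENNReal.ofReal (exp (-(c * x)))
      = ENNReal.ofReal (r / (r + c)) * exponentialPDF (r + c) x := by
    intro x
    rcases le_or_gt 0 x with hx | hx
    · rw [exponentialPDF_of_nonneg hx, exponentialPDF_of_nonneg hx,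
        ← ENNReal.ofReal_mul (by positivity), ← ENNReal.ofReal_mul (by positivity),
        mul_assoc, ← exp_add, ← mul_assoc, div_mul_cancel₀ r hrc.ne', add_mul, neg_add]
    · simp [exponentialPDF_of_neg hx]
  rw [expMeasure_eq_withDensity, lintegral_withDensity_eq_lintegral_mul _
    (measurable_exponentialPDF r) (by fun_prop)]
  simp_rw [Pi.mul_apply, hdensity]
  rw [lintegral_const_mul _ (measurable_exponentialPDF _), lintegral_exponentialPDF_eq_one hrc,
    mul_one]

lemma expMeasure_prod_setOf_lt {r s a b : ℝ} (hr : 0 < r) (hs : 0 < s) (ha : 0 ≤ a) (hb : 0 ≤ b) :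
    (expMeasure r).prod (expMeasure s) {p | a * p.2 + b < p.1}
      = ENNReal.ofReal (s / (s + r * a) * exp (-(r * b))) := by
  have := isProbabilityMeasure_expMeasure hr
  have := isProbabilityMeasure_expMeasure hs
  rw [Measure.prod_apply_symm (measurableSet_lt (by fun_prop) (by fun_prop))]
  calc ∫⁻ e, expMeasure r (Ioi (a * e + b)) ∂expMeasure s
      = ∫⁻ e, ENNReal.ofReal (exp (-(r * b))) * ENNReal.ofReal (exp (-(r * a * e)))
          ∂expMeasure s := by
        refine lintegral_congr_ae ?_
        filter_upwards [ae_nonneg_expMeasure s] with e he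
        rw [expMeasure_Ioi hr (by positivity), ← ENNReal.ofReal_mul (exp_pos _).le, ← exp_add]
        ring_nf
    _ = ENNReal.ofReal (s / (s + r * a) * exp (-(r * b))) := by
        rw [lintegral_const_mul _ (by fun_prop),
          lintegral_exp_neg_mul_expMeasure hs (by positivity), ← ENNReal.ofReal_mul (exp_pos _).le, mul_comm]

section RandomVariables

variable {Ω : Type*} [MeasurableSpace Ω] {P : Measure Ω}

lemma aemeasurable_of_map_eq_expMeasure {f : Ω → ℝ} {r : ℝ} (hr : 0 < r)
    (hf : P.map f = expMeasure r) : AEMeasurable f P :=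
  .of_map_ne_zero (hf ▸ (isProbabilityMeasure_expMeasure hr).ne_zero)

lemma ae_nonneg_of_map_eq_expMeasure {f : Ω → ℝ} {r : ℝ} (hr : 0 < r)
    (hf : P.map f = expMeasure r) : ∀ᵐ ω ∂P, 0 ≤ f ω :=
  ae_of_ae_map (aemeasurable_of_map_eq_expMeasure hr hf) (hf ▸ ae_nonneg_expMeasure r)

lemma measure_le_mul_add_of_indepFun_expMeasure [IsProbabilityMeasure P] {W E : Ω → ℝ}
    {r s a b : ℝ} (hr : 0 < r) (hs : 0 < s) (ha : 0 ≤ a) (hb : 0 ≤ b) (hind : IndepFun W E P)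
    (hW : P.map W = expMeasure r) (hE : P.map E = expMeasure s) :
    (P {ω | W ω ≤ a * E ω + b}).toReal = 1 - s / (s + r * a) * exp (-(r * b)) := by
  have hWm := aemeasurable_of_map_eq_expMeasure hr hW
  have hEm := aemeasurable_of_map_eq_expMeasure hs hE
  have hlaw : P.map (fun ω => (W ω, E ω)) = (expMeasure r).prod (expMeasure s) := by
    rw [← hW, ← hE]
    exact (indepFun_iff_map_prod_eq_prod_map_map hWm hEm).mp hind
  have htail : P {ω | a * E ω + b < W ω} = ENNReal.ofReal (s / (s + r * a) * exp (-(r * b))) := by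
    rw [← expMeasure_prod_setOf_lt hr hs ha hb, ← hlaw,
      Measure.map_apply_of_aemeasurable (hWm.prodMk hEm)
        (measurableSet_lt (by fun_prop) (by fun_prop))]
    rfl
  have hcompl : {ω | W ω ≤ a * E ω + b} = {ω | a * E ω + b < W ω}ᶜ := by
    ext ω
    simp [not_lt]
  rw [hcompl, prob_compl_eq_one_sub₀ (nullMeasurableSet_lt (by fun_prop) hWm),
    ENNReal.toReal_sub_of_le prob_le_one ENNReal.one_ne_top, htail, ENNReal.toReal_one,
    ENNReal.toReal_ofReal (by positivity)]

end RandomVariables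

section SINR

variable {P1 P2 N0 w e x : ℝ}

lemma sinr_le_iff (hP1 : 0 ≤ P1) (hP2 : 0 ≤ P2) (hN0 : 0 < N0) (hw : 0 ≤ w) (he : 0 ≤ e)
    (hx : x * P1 < P2) :
    w * P2 / (w * P1 + e * (P1 + P2) + N0) ≤ x ↔
      w ≤ x * (P1 + P2) / (P2 - x * P1) * e + x * N0 / (P2 - x * P1) := by
  have hden : 0 < w * P1 + e * (P1 + P2) + N0 := by positivity
  rw [div_mul_eq_mul_div, ← add_div, le_div_iff₀ (sub_pos.mpr hx), div_le_iff₀ hden]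
  constructor <;> intro h <;> linarith

lemma sinr_le_of_le_mul (hP1 : 0 ≤ P1) (hP2 : 0 ≤ P2) (hN0 : 0 < N0) (hw : 0 ≤ w) (he : 0 ≤ e)
    (hx : 0 ≤ x) (hxP : P2 ≤ x * P1) :
    w * P2 / (w * P1 + e * (P1 + P2) + N0) ≤ x := by
  have hden : 0 < w * P1 + e * (P1 + P2) + N0 := by positivity
  rw [div_le_iff₀ hden]
  linarith [mul_le_mul_of_nonneg_left hxP hw, mul_nonneg (mul_nonneg hx he) (add_nonneg hP1 hP2),
    mul_nonneg hx hN0.le]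

end SINR

/-- CDF formula (19): with `W = |ĥ2|²` and `E = |e2|²` independent
exponentials of means `σh2 = σ̂2²`, `σe2 = σ_{e2}²`, the CDF of
`X = W·P2/(W·P1 + E·(P1+P2) + N0)` is
`F_X(x) = 1 − (1 + x·(1+λ_P)/(λ_P−x)·σe2/σh2)⁻¹·exp(−x/((λ_P−x)·ρ12))` for
`0 ≤ x < λ_P`, and `F_X(x) = 1` for `x ≥ λ_P`, where `λ_P = P2/P1`,
`ρ12 = P1·σ̂2²/N0`. -/
theorem stmt_4 {Ω : Type*} [MeasurableSpace Ω] (P : Measure Ω) [IsProbabilityMeasure P]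
    (W E : Ω → ℝ) (σh2 σe2 P1 P2 N0 : ℝ)
    (hσh2 : 0 < σh2) (hσe2 : 0 < σe2)
    (hP1 : 0 < P1) (hP2 : 0 < P2) (hN0 : 0 < N0)
    (hind : IndepFun W E P)
    (hW : P.map W = expMean σh2) (hE : P.map E = expMean σe2)
    (lamP ρ12 : ℝ)
    (hlamP : lamP = P2 / P1) (hρ12 : ρ12 = P1 * σh2 / N0) (x : ℝ) :
    (0 ≤ x → x < lamP →
      (P {ω | W ω * P2 / (W ω * P1 + E ω * (P1 + P2) + N0) ≤ x}).toReal =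
        1 - (1 + x * (1 + lamP) / (lamP - x) * (σe2 / σh2))⁻¹ *
          Real.exp (-x / ((lamP - x) * ρ12))) ∧
    (lamP ≤ x →
      (P {ω | W ω * P2 / (W ω * P1 + E ω * (P1 + P2) + N0) ≤ x}).toReal = 1) := by
  rw [expMean_eq_expMeasure] at hW hE
  have hWnn := ae_nonneg_of_map_eq_expMeasure (inv_pos.mpr hσh2) hW
  have hEnn := ae_nonneg_of_map_eq_expMeasure (inv_pos.mpr hσe2) hE
  subst hlamP hρ12
  refine ⟨fun hx hxlam => ?_, fun hxlam => ?_⟩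
  · have hxP : x * P1 < P2 := (lt_div_iff₀ hP1).mp hxlam
    have hd : 0 < P2 - x * P1 := sub_pos.mpr hxP
    have hevent : {ω | W ω * P2 / (W ω * P1 + E ω * (P1 + P2) + N0) ≤ x} =ᵐ[P]
        {ω | W ω ≤ x * (P1 + P2) / (P2 - x * P1) * E ω + x * N0 / (P2 - x * P1)} := by
      filter_upwards [hWnn, hEnn] with ω hw he
      exact propext (sinr_le_iff hP1.le hP2.le hN0 hw he hxP)
    rw [measure_congr hevent, measure_le_mul_add_of_indepFun_expMeasure (inv_pos.mpr hσh2)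
      (inv_pos.mpr hσe2) (by positivity) (by positivity) hind hW hE]
    have hcoef : σe2⁻¹ / (σe2⁻¹ + σh2⁻¹ * (x * (P1 + P2) / (P2 - x * P1)))
        = (1 + x * (1 + P2 / P1) / (P2 / P1 - x) * (σe2 / σh2))⁻¹ := by
      field_simp
    have harg : -(σh2⁻¹ * (x * N0 / (P2 - x * P1))) = -x / ((P2 / P1 - x) * (P1 * σh2 / N0)) := by
      field_simp
    rw [hcoef, harg]
  · have hx : 0 < x := (div_pos hP2 hP1).trans_le hxlam
    have hxP : P2 ≤ x * P1 := (div_le_iff₀ hP1).mp hxlam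
    have hevent : {ω | W ω * P2 / (W ω * P1 + E ω * (P1 + P2) + N0) ≤ x} =ᵐ[P] Set.univ := by
      refine Filter.eventuallyEq_univ.mpr ?_
      filter_upwards [hWnn, hEnn] with ω hw he
      exact sinr_le_of_le_mul hP1.le hP2.le hN0 hw he hx.le hxP
    rw [measure_congr hevent, measure_univ, ENNReal.toReal_one]
end

section
/- Let λ_P, γ̄1, γ̄2, σ_c², σ̂1² be positive reals with λ_P > γ̄2, and set χ = γ̄2/(λ_P − γ̄2) and χ_M = max{χ, γ̄1}. Define, for ρ > 0, f(ρ) = 1 − (1 + χ_M·(1+λ_P)·σ_c²/σ̂1²)^{−1}·exp(−χ_M/ρ). Then f(ρ) tends, as ρ → ∞, to the limit (1+λ_P)·χ_M·(σ_c²/σ̂1²) / (1 + (1+λ_P)·χ_M·(σ_c²/σ̂1²)); in particular the outage probability of the near user with constant channel-estimation-error variance σ_{e1}² = σ_c² approaches a strictly positive floor that is independent of the SNR and increasing in σ_c². -/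
open Filter Set Topology

/-! Writing `x = (1 + λ_P) χ_M σ_c / σ̂1²`, the factor `exp (-χ_M / ρ)` tends to `1`, so
`f ρ → 1 - (1 + x)⁻¹ = x / (1 + x)`. The floor is `x ↦ x / (1 + x)`, which is positive and
strictly increasing for `x > 0`, composed with `σ_c ↦ x`, linear with positive slope
because `χ_M ≥ γ̄1 > 0`. -/

lemma one_sub_inv_one_add {x : ℝ} (hx : 1 + x ≠ 0) : 1 - (1 + x)⁻¹ = x / (1 + x) := by
  field_simp
  ring

lemma strictMonoOn_div_one_add : StrictMonoOn (fun x : ℝ => x / (1 + x)) (Ioi (-1)) := by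
  intro x hx y hy hxy
  simp only [mem_Ioi] at hx hy
  rw [div_lt_div_iff₀ (by linarith) (by linarith)]
  linarith

lemma tendsto_one_sub_mul_exp_neg_div_atTop (c k : ℝ) :
    Tendsto (fun ρ : ℝ => 1 - c * Real.exp (-k / ρ)) atTop (𝓝 (1 - c)) := by
  have hexp : Tendsto (fun ρ : ℝ => Real.exp (-k / ρ)) atTop (𝓝 1) := by
    rw [← Real.exp_zero]
    refine (Real.continuous_exp.tendsto 0).comp ?_
    simpa using tendsto_const_nhds.div_atTop tendsto_id
  simpa using (hexp.const_mul c).const_sub 1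

theorem stmt_11_general (lamP γ1 σc σh1 : ℝ)
    (hlamP : 0 < lamP) (hγ1 : 0 < γ1) (hσc : 0 < σc) (hσh1 : 0 < σh1)
    (χ χM : ℝ) (hχM : χM = max χ γ1)
    (f : ℝ → ℝ) (L : ℝ → ℝ)
    (hf : ∀ ρ, f ρ = 1 - (1 + χM * (1 + lamP) * σc / σh1)⁻¹ * Real.exp (-χM / ρ))
    (hL : ∀ s, L s = (1 + lamP) * χM * (s / σh1) / (1 + (1 + lamP) * χM * (s / σh1))) :
    Tendsto f atTop (nhds (L σc)) ∧ 0 < L σc ∧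
      ∀ s s' : ℝ, 0 < s → s < s' → L s < L s' := by
  set a := (1 + lamP) * χM / σh1
  have hχM : 0 < χM := hχM ▸ hγ1.trans_le (le_max_right _ _)
  have ha : 0 < a := by positivity
  have hLa : ∀ s, L s = a * s / (1 + a * s) := fun s => by rw [hL]; ring
  have hfa : f = fun ρ => 1 - (1 + a * σc)⁻¹ * Real.exp (-χM / ρ) :=
    funext fun ρ => by rw [hf]; ring
  refine ⟨?_, ?_, fun s s' hs hss' => ?_⟩
  · rw [hfa, hLa, ← one_sub_inv_one_add (by positivity)]
    exact tendsto_one_sub_mul_exp_neg_div_atTop _ χM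
  · rw [hLa]
    positivity
  · rw [hLa, hLa]
    exact strictMonoOn_div_one_add (neg_one_lt_zero.trans (mul_pos ha hs))
      (neg_one_lt_zero.trans (mul_pos ha (hs.trans hss'))) (mul_lt_mul_of_pos_left hss' ha)

/-- Theorem 3, eq. (22): with constant channel-estimation-error
variance `σc² = σc`, the near-user outage probability
`f(ρ) = 1 − (1 + χ_M·(1+λ_P)·σc/σ̂1²)⁻¹·exp(−χ_M/ρ)` tends, as `ρ → ∞`, to the
floor `L(σc) = (1+λ_P)·χ_M·(σc/σ̂1²)/(1 + (1+λ_P)·χ_M·(σc/σ̂1²))`; moreover the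
floor is strictly positive (independent of the SNR) and increasing in the error
variance. -/
theorem stmt_11 (lamP γ1 γ2 σc σh1 : ℝ)
    (hlamP : 0 < lamP) (hγ1 : 0 < γ1) (hγ2 : 0 < γ2) (hσc : 0 < σc) (hσh1 : 0 < σh1)
    (hlam : γ2 < lamP)
    (χ χM : ℝ) (hχ : χ = γ2 / (lamP - γ2)) (hχM : χM = max χ γ1)
    (f : ℝ → ℝ) (L : ℝ → ℝ)
    (hf : ∀ ρ, f ρ = 1 - (1 + χM * (1 + lamP) * σc / σh1)⁻¹ * Real.exp (-χM / ρ))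
    (hL : ∀ s, L s = (1 + lamP) * χM * (s / σh1) / (1 + (1 + lamP) * χM * (s / σh1))) :
    Tendsto f atTop (nhds (L σc)) ∧ 0 < L σc ∧
      ∀ s s' : ℝ, 0 < s → s < s' → L s < L s' :=
  stmt_11_general lamP γ1 σc σh1 hlamP hγ1 hσc hσh1 χ χM hχM f L hf hL
end

section
/- Let λ_P, γ̄1, γ̄2, η, σ̂1² be positive reals with λ_P > γ̄2, and set χ = γ̄2/(λ_P − γ̄2) and χ_M = max{χ, γ̄1}. Define, for ρ > 0, g(ρ) = 1 − (1 + χ_M·(1+λ_P)·η/(ρ·σ̂1²))^{−1}·exp(−χ_M/ρ). Then ρ·g(ρ) tends, as ρ → ∞, to χ_M·( (1+λ_P)·η/σ̂1² + 1 ); in particular, with estimation-error variance decreasing inversely with SNR, the near user's outage probability decays like 1/ρ (diversity order one) with no error floor. -/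
/-!
Writing `c = χ_M (1 + λ_P) η / σ̂₁²`, we have `g ρ = G ρ⁻¹` for the smooth function
`G t = 1 - (1 + c t)⁻¹ exp (-χ_M t)`, which vanishes at `0`. Hence `ρ g ρ` is a difference
quotient of `G` at `0` and tends to `G' 0 = c + χ_M`, while `g ρ → G 0 = 0`.
-/

open Filter Topology Real

theorem HasDerivAt.tendsto_smul_sub_inv_atTop {E : Type*} [NormedAddCommGroup E]
    [NormedSpace ℝ E] {f : ℝ → E} {f' : E} (hf : HasDerivAt f f' 0) :
    Tendsto (fun ρ : ℝ => ρ • (f ρ⁻¹ - f 0)) atTop (𝓝 f') := by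
  have hslope := (hasDerivAt_iff_tendsto_slope_zero.mp hf).comp
    (tendsto_inv_atTop_nhdsGT_zero.mono_right (nhdsGT_le_nhdsNE 0))
  simpa [Function.comp_def] using hslope

theorem hasDerivAt_one_sub_inv_one_add_mul_mul_exp (c a : ℝ) :
    HasDerivAt (fun t : ℝ => 1 - (1 + c * t)⁻¹ * exp (-a * t)) (c + a) 0 := by
  have hlin : HasDerivAt (fun t : ℝ => 1 + c * t) c 0 := by
    simpa using ((hasDerivAt_id (0 : ℝ)).const_mul c).const_add 1
  have hinv := hlin.inv (by norm_num)
  have hexp := ((hasDerivAt_id (0 : ℝ)).const_mul (-a)).exp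
  exact ((hinv.mul hexp).const_sub 1).congr_deriv (by simp [add_comm])

theorem stmt_12_general (lamP η σh1 : ℝ)
    (χM : ℝ)
    (g : ℝ → ℝ)
    (hg : ∀ ρ, g ρ = 1 - (1 + χM * (1 + lamP) * η / (ρ * σh1))⁻¹ * Real.exp (-χM / ρ)) :
    Tendsto (fun ρ => ρ * g ρ) atTop (nhds (χM * ((1 + lamP) * η / σh1 + 1))) ∧
      Tendsto g atTop (nhds 0) := by
  set c := χM * (1 + lamP) * η / σh1
  set G : ℝ → ℝ := fun t => 1 - (1 + c * t)⁻¹ * exp (-χM * t)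
  have hG : HasDerivAt G (c + χM) 0 := hasDerivAt_one_sub_inv_one_add_mul_mul_exp c χM
  have hG0 : G 0 = 0 := by simp [G]
  have hgG : g = fun ρ => G ρ⁻¹ := by
    funext ρ
    simp only [hg, G, c]
    ring_nf
  constructor
  · convert hG.tendsto_smul_sub_inv_atTop using 2 with ρ
    · simp [hgG, hG0]
    · ring
  · simpa [hgG, hG0, Function.comp_def] using hG.continuousAt.tendsto.comp tendsto_inv_atTop_zero

/-- Theorem 3, eq. (25): with channel-estimation-error variance
decreasing inversely with the SNR (`σ_{e1}² = η/ρ`), the near-user outage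
probability `g(ρ) = 1 − (1 + χ_M·(1+λ_P)·η/(ρ·σ̂1²))⁻¹·exp(−χ_M/ρ)` satisfies
`ρ·g(ρ) → χ_M·((1+λ_P)·η/σ̂1² + 1)` as `ρ → ∞`; in particular it decays like
`1/ρ` (diversity order one) with no error floor. -/
theorem stmt_12 (lamP γ1 γ2 η σh1 : ℝ)
    (hlamP : 0 < lamP) (hγ1 : 0 < γ1) (hγ2 : 0 < γ2) (hη : 0 < η) (hσh1 : 0 < σh1)
    (hlam : γ2 < lamP)
    (χ χM : ℝ) (hχ : χ = γ2 / (lamP - γ2)) (hχM : χM = max χ γ1)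
    (g : ℝ → ℝ)
    (hg : ∀ ρ, g ρ = 1 - (1 + χM * (1 + lamP) * η / (ρ * σh1))⁻¹ * Real.exp (-χM / ρ)) :
    Tendsto (fun ρ => ρ * g ρ) atTop (nhds (χM * ((1 + lamP) * η / σh1 + 1))) ∧
      Tendsto g atTop (nhds 0) :=
  stmt_12_general lamP η σh1 χM g hg
end
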